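/- arXiv:1806.07838 — 2 statements merged into one kernel-verified Lean document; each statement's English description precedes it below -/
import Mathlib

section
/- Let f: [0,1] \to [0,1] be increasing with f(q)=q and suppose f is k times continuously differentiable near q with f'(q)=\xi>1, f^{(r)}(q)=0 for 1<r<k, and f^{(k)}(q)>0 with k even. Let c > f^{(k)}(q)/(k! \xi(\xi^{k-1}-1)) and define g_n(x) = f^n(q + x/\xi^n). Then there exists \epsilon > 0 such that for all n \ge 0 and all |x| \le \epsilon, q + x \le g_n(x) \le q + x + c x^k. -/
/-!
Write `A = f⁽ᵏ⁾(q) / k!` and `M = c ξ (ξ^(k-1) - 1)`, so that the hypothesis on `c` says `A < M`.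
By Taylor's theorem with Peano remainder, for any `B ∈ (A, M)` we have
`q + ξ (u - q) ≤ f u ≤ q + ξ (u - q) + B (u - q)^k` near `q`; the lower bound holds because
`A > 0` and `k` is even.

Since `g (n+1) x = f (g n (x / ξ))`, the bounds propagate by induction: if
`y ≤ u - q ≤ y + c y^k` with `y = x / ξ`, then `f u ≥ q + ξ y = q + x`, and
`f u ≤ q + ξ (y + c y^k) + B (u - q)^k` with `(u - q)^k ≤ y^k (1 + c ε^(k-1))^k`. For `ε` small,
`B (1 + c ε^(k-1))^k ≤ M`, and `ξ c y^k + M y^k = c (ξ y)^k = c x^k` closes the induction.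
-/

open Filter Topology Asymptotics Finset
open scoped Nat

lemma sum_range_div_factorial_mul_pow_of_gap {a : ℕ → ℝ} {k : ℕ} (hk : 2 ≤ k)
    (ha : ∀ r, 1 < r → r < k → a r = 0) (y : ℝ) :
    ∑ i ∈ range (k + 1), a i / i ! * y ^ i = a 0 + a 1 * y + a k / k ! * y ^ k := by
  obtain ⟨m, rfl⟩ : ∃ m, k = m + 2 := ⟨k - 2, by omega⟩
  rw [sum_range_succ, sum_range_succ', sum_range_succ', sum_eq_zero fun i hi => ?_]
  · simp only [zero_add, Nat.factorial_zero, Nat.factorial_one, Nat.cast_one, div_one, pow_zero,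
      pow_one]
    ring
  · rw [ha (i + 2) (by omega) (by simp at hi; omega)]
    simp

theorem ContDiffAt.isLittleO_sub_taylor {f : ℝ → ℝ} {q : ℝ} {n : ℕ} (hf : ContDiffAt ℝ n f q) :
    (fun x => f x - ∑ i ∈ range (n + 1), iteratedDeriv i f q / i ! * (x - q) ^ i) =o[𝓝 q]
      fun x => (x - q) ^ n := by
  obtain ⟨u, hu, hfu⟩ := hf.contDiffOn le_rfl (by simp)
  obtain ⟨r, hr, hball⟩ := Metric.mem_nhds_iff.mp hu
  have hq : q ∈ Metric.ball q r := Metric.mem_ball_self hr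
  have h := taylor_isLittleO (convex_ball q r) hq (hfu.mono hball)
  rw [Metric.isOpen_ball.nhdsWithin_eq hq] at h
  refine h.congr_left fun x => ?_
  rw [taylor_within_apply]
  congr 1
  refine sum_congr rfl fun i _ => ?_
  rw [iteratedDerivWithin_of_isOpen Metric.isOpen_ball hq, smul_eq_mul]
  ring

lemma eventually_le_and_le_of_isLittleO {f p : ℝ → ℝ} {q A B : ℝ} {k : ℕ} (hk : Even k)
    (h : (fun u => f u - (p u + A * (u - q) ^ k)) =o[𝓝 q] fun u => (u - q) ^ k)
    (hA : 0 < A) (hAB : A < B) :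
    ∀ᶠ u in 𝓝 q, p u ≤ f u ∧ f u ≤ p u + B * (u - q) ^ k := by
  filter_upwards [h.def (lt_min hA (sub_pos.2 hAB))] with u hu
  have hk0 : 0 ≤ (u - q) ^ k := hk.pow_nonneg _
  rw [Real.norm_eq_abs, Real.norm_eq_abs, abs_of_nonneg hk0, abs_le] at hu
  have h1 := mul_le_mul_of_nonneg_right (min_le_left A (B - A)) hk0
  have h2 := mul_le_mul_of_nonneg_right (min_le_right A (B - A)) hk0
  constructor <;> linarith

lemma exists_pos_mul_lt_and_mul_pow_lt {c B ρ M : ℝ} {k : ℕ} (hk : 2 ≤ k) (hρ : 0 < ρ)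
    (hBM : B < M) :
    ∃ ε > 0, ε * (1 + c * ε ^ (k - 1)) < ρ ∧ B * (1 + c * ε ^ (k - 1)) ^ k < M := by
  have hk1 : k - 1 ≠ 0 := by omega
  have h1 : ∀ᶠ ε in 𝓝 (0 : ℝ), ε * (1 + c * ε ^ (k - 1)) < ρ :=
    (by fun_prop : Continuous fun ε : ℝ => ε * (1 + c * ε ^ (k - 1))).continuousAt
      |>.eventually_lt continuousAt_const (by simpa using hρ)
  have h2 : ∀ᶠ ε in 𝓝 (0 : ℝ), B * (1 + c * ε ^ (k - 1)) ^ k < M :=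
    (by fun_prop : Continuous fun ε : ℝ => B * (1 + c * ε ^ (k - 1)) ^ k).continuousAt
      |>.eventually_lt continuousAt_const (by simpa [zero_pow hk1] using hBM)
  have h : ∀ᶠ ε in 𝓝[>] (0 : ℝ), 0 < ε ∧ _ :=
    (eventually_mem_nhdsWithin (s := Set.Ioi 0)).and ((h1.and h2).filter_mono nhdsWithin_le_nhds)
  exact h.exists

section iteration

variable {f : ℝ → ℝ} {q ξ c B ε ρ : ℝ} {k : ℕ}

lemma abs_le_of_le_of_le_add_mul_pow (hk : Even k) (hk1 : 1 ≤ k) (hc : 0 ≤ c) {y s : ℝ}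
    (hy : |y| ≤ ε) (hlo : y ≤ s) (hhi : s ≤ y + c * y ^ k) :
    |s| ≤ |y| * (1 + c * ε ^ (k - 1)) := by
  have hε : 0 ≤ ε := (abs_nonneg y).trans hy
  have hyk : y ^ k = |y| * |y| ^ (k - 1) := by
    rw [← hk.pow_abs, ← pow_succ', Nat.sub_add_cancel hk1]
  have hpow : |y| ^ (k - 1) ≤ ε ^ (k - 1) := pow_le_pow_left₀ (abs_nonneg y) hy _
  have hcy : c * y ^ k ≤ |y| * (c * ε ^ (k - 1)) := by
    rw [hyk]
    nlinarith [mul_nonneg hc (abs_nonneg y)]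
  have hnn : 0 ≤ |y| * (c * ε ^ (k - 1)) := by positivity
  rw [abs_le]
  constructor <;> nlinarith [neg_abs_le y, le_abs_self y]

lemma bounds_apply_of_bounds (hk : Even k) (hk1 : 1 ≤ k) (hξ : 0 < ξ) (hc : 0 ≤ c) (hB : 0 ≤ B)
    (hloc : ∀ ⦃u⦄, dist u q < ρ →
      q + ξ * (u - q) ≤ f u ∧ f u ≤ q + ξ * (u - q) + B * (u - q) ^ k)
    (hερ : ε * (1 + c * ε ^ (k - 1)) < ρ)
    (hεB : B * (1 + c * ε ^ (k - 1)) ^ k ≤ c * ξ * (ξ ^ (k - 1) - 1))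
    {y u : ℝ} (hy : |y| ≤ ε) (hlo : q + y ≤ u) (hhi : u ≤ q + y + c * y ^ k) :
    q + ξ * y ≤ f u ∧ f u ≤ q + ξ * y + c * (ξ * y) ^ k := by
  set L := 1 + c * ε ^ (k - 1)
  have hL : 0 ≤ L := by have := (abs_nonneg y).trans hy; positivity
  have hs : |u - q| ≤ |y| * L :=
    abs_le_of_le_of_le_add_mul_pow hk hk1 hc hy (by linarith) (by linarith)
  obtain ⟨hflo, hfhi⟩ := hloc (by
    rw [Real.dist_eq]
    exact hs.trans_lt ((mul_le_mul_of_nonneg_right hy hL).trans_lt hερ))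
  have hpow : B * (u - q) ^ k ≤ c * ξ * (ξ ^ (k - 1) - 1) * y ^ k :=
    calc B * (u - q) ^ k = B * |u - q| ^ k := by rw [hk.pow_abs]
      _ ≤ B * (|y| * L) ^ k := by gcongr
      _ = B * L ^ k * y ^ k := by rw [mul_pow, hk.pow_abs]; ring
      _ ≤ _ := mul_le_mul_of_nonneg_right hεB (hk.pow_nonneg y)
  have hξk : ξ * ξ ^ (k - 1) = ξ ^ k := by rw [← pow_succ', Nat.sub_add_cancel hk1]
  constructor
  · nlinarith
  · calc f u ≤ q + ξ * (u - q) + B * (u - q) ^ k := hfhi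
      _ ≤ q + ξ * (y + c * y ^ k) + c * ξ * (ξ ^ (k - 1) - 1) * y ^ k := by
        gcongr
        linarith
      _ = q + ξ * y + c * (ξ * y) ^ k := by rw [mul_pow, ← hξk]; ring

theorem bounds_iterate_div_pow (hk : Even k) (hk1 : 1 ≤ k) (hξ : 1 ≤ ξ) (hc : 0 ≤ c)
    (hB : 0 ≤ B)
    (hloc : ∀ ⦃u⦄, dist u q < ρ →
      q + ξ * (u - q) ≤ f u ∧ f u ≤ q + ξ * (u - q) + B * (u - q) ^ k)
    (hερ : ε * (1 + c * ε ^ (k - 1)) < ρ)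
    (hεB : B * (1 + c * ε ^ (k - 1)) ^ k ≤ c * ξ * (ξ ^ (k - 1) - 1)) (n : ℕ) {x : ℝ}
    (hx : |x| ≤ ε) :
    q + x ≤ f^[n] (q + x / ξ ^ n) ∧ f^[n] (q + x / ξ ^ n) ≤ q + x + c * x ^ k := by
  induction n generalizing x with
  | zero => simp [mul_nonneg hc (hk.pow_nonneg x)]
  | succ n ih =>
    have hξ0 : 0 < ξ := by linarith
    have hxξ : |x / ξ| ≤ ε := by
      rw [abs_div, abs_of_pos hξ0]
      exact (div_le_self (abs_nonneg x) hξ).trans hx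
    obtain ⟨hlo, hhi⟩ := ih hxξ
    rw [Function.iterate_succ_apply', pow_succ', ← div_div]
    simpa only [mul_div_cancel₀ x hξ0.ne'] using
      bounds_apply_of_bounds hk hk1 hξ0 hc hB hloc hερ hεB hxξ hlo hhi

end iteration

theorem stmt_14_general (f : ℝ → ℝ) (q ξ c : ℝ) (k : ℕ)
    (hk2 : 2 ≤ k) (hkeven : Even k)
    (hfix : f q = q)
    (hsmooth : ContDiffAt ℝ k f q)
    (hd1 : iteratedDeriv 1 f q = ξ) (hξ : 1 < ξ)
    (hdr : ∀ r, 1 < r → r < k → iteratedDeriv r f q = 0)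
    (hdk : 0 < iteratedDeriv k f q)
    (hc : iteratedDeriv k f q / (k.factorial * ξ * (ξ ^ (k - 1) - 1)) < c) :
    ∃ ε > 0, ∀ n : ℕ, ∀ x : ℝ, |x| ≤ ε →
      q + x ≤ f^[n] (q + x / ξ ^ n) ∧
      f^[n] (q + x / ξ ^ n) ≤ q + x + c * x ^ k := by
  set A := iteratedDeriv k f q / (k ! : ℝ)
  set M := c * ξ * (ξ ^ (k - 1) - 1)
  have hgap : 0 < ξ * (ξ ^ (k - 1) - 1) :=
    mul_pos (by linarith) (sub_pos.2 (one_lt_pow₀ hξ (by omega)))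
  have hAM : A < M := by
    rw [div_lt_iff₀ (by rw [mul_assoc]; exact mul_pos (by positivity) hgap)] at hc
    rw [div_lt_iff₀ (by positivity)]
    linarith
  have hA : 0 < A := div_pos hdk (by positivity)
  have hc0 : 0 ≤ c := by nlinarith
  have htaylor := hsmooth.isLittleO_sub_taylor
  simp_rw [sum_range_div_factorial_mul_pow_of_gap hk2 hdr, iteratedDeriv_zero, hfix, hd1]
    at htaylor
  obtain ⟨ρ, hρ, hloc⟩ := Metric.eventually_nhds_iff.mp <|
    eventually_le_and_le_of_isLittleO (p := fun u => q + ξ * (u - q)) hkeven htaylor hA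
      (left_lt_add_div_two.2 hAM)
  obtain ⟨ε, hε, hερ, hεB⟩ :=
    exists_pos_mul_lt_and_mul_pow_lt hk2 hρ (add_div_two_lt_right.2 hAM)
  exact ⟨ε, hε, fun n x hx =>
    bounds_iterate_div_pow hkeven (by omega) hξ.le hc0 (by linarith) hloc hερ hεB.le n hx⟩

theorem stmt_14 (f : ℝ → ℝ) (q ξ c : ℝ) (k : ℕ)
    (hk2 : 2 ≤ k) (hkeven : Even k)
    (hmono : MonotoneOn f (Set.Icc 0 1))
    (hmap : Set.MapsTo f (Set.Icc 0 1) (Set.Icc 0 1))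
    (hq : q ∈ Set.Icc (0:ℝ) 1) (hfix : f q = q)
    (hsmooth : ContDiffAt ℝ k f q)
    (hd1 : iteratedDeriv 1 f q = ξ) (hξ : 1 < ξ)
    (hdr : ∀ r, 1 < r → r < k → iteratedDeriv r f q = 0)
    (hdk : 0 < iteratedDeriv k f q)
    (hc : iteratedDeriv k f q / (k.factorial * ξ * (ξ ^ (k - 1) - 1)) < c) :
    ∃ ε > 0, ∀ n : ℕ, ∀ x : ℝ, |x| ≤ ε →
      q + x ≤ f^[n] (q + x / ξ ^ n) ∧
      f^[n] (q + x / ξ ^ n) ≤ q + x + c * x ^ k :=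
  stmt_14_general f q ξ c k hk2 hkeven hfix hsmooth hd1 hξ hdr hdk hc
end

section
/- Let G be the probability generating function of a distribution (p_k) on {1,2,...}, R = 1 - G. Fix x \in (0,1) with f(x) = x where f = R\circ R, and define h(b) = R(2R(x) - R(x-b)) - R(R(x)) for b \in [0, \min(x,1-x)]. Then h(0) = 0, h'(0) = f'(x), and if G'' exists and G is strictly convex with G' > 0 on the relevant range, then h is strictly increasing and strictly concave on (0, \min(x,1-x)). Consequently: if f'(x) \le 1 then h(b) < b for all b \in (0, \min(x,1-x)], and if f'(x) > 1 then h has a fixed point in (0, \min(x,1-x)]. -/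
/-!
The map `h` is `R ∘ u` up to a constant, where `u b = 2 R(x) - R(x - b)`; the chain rule gives
`h' = R'(u) R'(x - ·)`, a product of two negative factors, and
`h'' = R''(u) R'(x - ·)² - R'(u) R''(x - ·)`, a sum of two negative terms.
So `h` is strictly increasing and strictly concave, with `h 0 = 0` and `h'(0) = f'(x)`.
Strict concavity puts the chord slope `h(b)/b` below `h'(0)`, which gives `h(b) < b` when
`f'(x) ≤ 1`. When `f'(x) > 1` we have `h(b) > b` near `0`, while concavity of `R`, `R 1 = 0`
and `R (R x) = x` give `h(m) ≤ m` at the endpoint `m = min x (1 - x)`; the intermediate value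
theorem then yields a fixed point.
-/

open Set Filter Topology

section Calculus

variable {D : Set ℝ} {f f' f'' : ℝ → ℝ}

theorem strictMonoOn_of_forall_hasDerivAt_pos (hD : Convex ℝ D)
    (hf : ∀ t ∈ D, HasDerivAt f (f' t) t) (hf' : ∀ t ∈ D, 0 < f' t) : StrictMonoOn f D :=
  strictMonoOn_of_hasDerivWithinAt_pos hD
    (fun t ht => (hf t ht).continuousAt.continuousWithinAt)
    (fun t ht => (hf t (interior_subset ht)).hasDerivWithinAt)
    (fun t ht => hf' t (interior_subset ht))

theorem strictAntiOn_of_forall_hasDerivAt_neg (hD : Convex ℝ D)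
    (hf : ∀ t ∈ D, HasDerivAt f (f' t) t) (hf' : ∀ t ∈ D, f' t < 0) : StrictAntiOn f D :=
  strictAntiOn_of_hasDerivWithinAt_neg hD
    (fun t ht => (hf t ht).continuousAt.continuousWithinAt)
    (fun t ht => (hf t (interior_subset ht)).hasDerivWithinAt)
    (fun t ht => hf' t (interior_subset ht))

theorem strictConcaveOn_of_forall_hasDerivAt2_neg (hD : Convex ℝ D)
    (hf : ∀ t ∈ D, HasDerivAt f (f' t) t) (hf' : ∀ t ∈ D, HasDerivAt f' (f'' t) t)
    (hf'' : ∀ t ∈ D, f'' t < 0) : StrictConcaveOn ℝ D f := by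
  have hanti : StrictAntiOn f' (interior D) :=
    strictAntiOn_of_forall_hasDerivAt_neg hD.interior
      (fun t ht => hf' t (interior_subset ht)) (fun t ht => hf'' t (interior_subset ht))
  exact (hanti.congr fun t ht => (hf t (interior_subset ht)).deriv.symm).strictConcaveOn_of_deriv
    hD fun t ht => (hf t ht).continuousAt.continuousWithinAt

theorem HasDerivAt.comp_const_sub_comp_const_sub {S R : ℝ → ℝ} {s r c x b : ℝ}
    (hS : HasDerivAt S s (c - R (x - b))) (hR : HasDerivAt R r (x - b)) :
    HasDerivAt (fun b => S (c - R (x - b))) (s * r) b := by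
  have := hS.comp b ((hR.comp_const_sub x b).const_sub c)
  rwa [neg_neg] at this

theorem ConcaveOn.add_le_two_mul_map_midpoint (hf : ConcaveOn ℝ D f) {a c : ℝ}
    (ha : a ∈ D) (hc : c ∈ D) : f a + f c ≤ 2 * f ((a + c) / 2) := by
  have := hf.2 ha hc (by norm_num : (0 : ℝ) ≤ 1 / 2) (by norm_num : (0 : ℝ) ≤ 1 / 2)
    (by norm_num)
  simp only [smul_eq_mul] at this
  rw [show (a + c) / 2 = 1 / 2 * a + 1 / 2 * c by ring]
  linarith

end Calculus

section FixedPoints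

variable {g : ℝ → ℝ} {d m : ℝ}

theorem StrictConcaveOn.lt_self_of_hasDerivAt_zero_le_one (hg : StrictConcaveOn ℝ (Icc 0 m) g)
    (hg0 : g 0 = 0) (hd : HasDerivAt g d 0) (hd1 : d ≤ 1) : ∀ b ∈ Ioc 0 m, g b < b := by
  intro b ⟨hb0, hbm⟩
  have hslope := hg.slope_lt_of_hasDerivAt ⟨le_rfl, hb0.le.trans hbm⟩ ⟨hb0.le, hbm⟩ hb0 hd
  rw [slope_def_field, hg0, sub_zero, sub_zero, div_lt_iff₀ hb0] at hslope
  exact hslope.trans_le (mul_le_of_le_one_left hb0.le hd1)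

theorem exists_mem_Ioc_eq_self_of_one_lt_deriv (hm : 0 < m) (hg : ContinuousOn g (Icc 0 m))
    (hg0 : g 0 = 0) (hd : HasDerivAt g d 0) (hd1 : 1 < d) (hgm : g m ≤ m) :
    ∃ b ∈ Ioc 0 m, g b = b := by
  have hslope : ∀ᶠ t in 𝓝[>] (0 : ℝ), 1 < t⁻¹ • (g (0 + t) - g 0) :=
    hd.tendsto_slope_zero_right.eventually (eventually_gt_nhds hd1)
  obtain ⟨b₁, hb₁, ⟨hb₁0, hb₁m⟩⟩ := (hslope.and (Ioo_mem_nhdsGT hm)).exists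
  have hgb₁ : b₁ < g b₁ := by
    rwa [zero_add, hg0, sub_zero, smul_eq_mul, ← div_eq_inv_mul, one_lt_div hb₁0] at hb₁
  have hcont : ContinuousOn (fun b => g b - b) (Icc b₁ m) :=
    (hg.mono (Icc_subset_Icc hb₁0.le le_rfl)).sub continuousOn_id
  obtain ⟨b, hb, hgb⟩ := intermediate_value_Icc' hb₁m.le hcont
    (⟨by linarith, by linarith⟩ : (0 : ℝ) ∈ Icc (g m - m) (g b₁ - b₁))
  exact ⟨b, ⟨hb₁0.trans_le hb.1, hb.2⟩, by linarith [show g b - b = 0 from hgb]⟩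

end FixedPoints

section Composite

variable {R R' R'' g : ℝ → ℝ} {D S : Set ℝ} {c k x : ℝ}

theorem hasDerivAt_of_eq_comp_const_sub (hg : ∀ b, g b = R (c - R (x - b)) - k) {b : ℝ}
    (hRc : HasDerivAt R (R' (c - R (x - b))) (c - R (x - b)))
    (hR : HasDerivAt R (R' (x - b)) (x - b)) :
    HasDerivAt g (R' (c - R (x - b)) * R' (x - b)) b :=
  funext hg ▸ (hRc.comp_const_sub_comp_const_sub hR).sub_const k

theorem strictMonoOn_of_eq_comp_const_sub (hg : ∀ b, g b = R (c - R (x - b)) - k)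
    (hS : Convex ℝ S) (hR' : ∀ t ∈ D, HasDerivAt R (R' t) t) (hR'neg : ∀ t ∈ D, R' t < 0)
    (hmaps : ∀ b ∈ S, x - b ∈ D ∧ c - R (x - b) ∈ D) : StrictMonoOn g S :=
  strictMonoOn_of_forall_hasDerivAt_pos hS
    (fun b hb => hasDerivAt_of_eq_comp_const_sub hg (hR' _ (hmaps b hb).2) (hR' _ (hmaps b hb).1))
    (fun b hb => mul_pos_of_neg_of_neg (hR'neg _ (hmaps b hb).2) (hR'neg _ (hmaps b hb).1))

theorem strictConcaveOn_of_eq_comp_const_sub (hg : ∀ b, g b = R (c - R (x - b)) - k)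
    (hS : Convex ℝ S) (hR' : ∀ t ∈ D, HasDerivAt R (R' t) t)
    (hR'' : ∀ t ∈ D, HasDerivAt R' (R'' t) t) (hR'neg : ∀ t ∈ D, R' t < 0)
    (hR''neg : ∀ t ∈ D, R'' t < 0) (hmaps : ∀ b ∈ S, x - b ∈ D ∧ c - R (x - b) ∈ D) :
    StrictConcaveOn ℝ S g := by
  refine strictConcaveOn_of_forall_hasDerivAt2_neg hS
    (fun b hb =>
      hasDerivAt_of_eq_comp_const_sub hg (hR' _ (hmaps b hb).2) (hR' _ (hmaps b hb).1))
    (f'' := fun b => R'' (c - R (x - b)) * R' (x - b) ^ 2 - R' (c - R (x - b)) * R'' (x - b))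
    (fun b hb => ?_) (fun b hb => ?_)
  · exact (((hR'' _ (hmaps b hb).2).comp_const_sub_comp_const_sub (hR' _ (hmaps b hb).1)).fun_mul
      ((hR'' _ (hmaps b hb).1).comp_const_sub x b)).congr_deriv (by ring)
  · have hout := mul_pos_of_neg_of_neg (hR'neg _ (hmaps b hb).2) (hR''neg _ (hmaps b hb).1)
    have hin := mul_neg_of_neg_of_pos (hR''neg _ (hmaps b hb).2)
      (sq_pos_of_neg (hR'neg _ (hmaps b hb).1))
    linarith

end Composite

section Reflection

variable {R : ℝ → ℝ} {x : ℝ}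

theorem map_mem_Icc_zero_one (hR : AntitoneOn R (Icc (-1) 1)) (hR0 : R 0 = 1) (hR1 : R 1 = 0)
    {t : ℝ} (ht : t ∈ Icc 0 1) : R t ∈ Icc 0 1 :=
  ⟨hR1 ▸ hR ⟨by linarith [ht.1], ht.2⟩ ⟨by norm_num, le_rfl⟩ ht.2,
    hR0 ▸ hR ⟨by norm_num, zero_le_one⟩ ⟨by linarith [ht.1], ht.2⟩ ht.1⟩

theorem sub_mem_Icc_and_two_mul_sub_mem_Icc (hR : AntitoneOn R (Icc (-1) 1)) (hR0 : R 0 = 1)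
    (hR1 : R 1 = 0) (hx : x ∈ Ioo 0 1) {b : ℝ} (hb : b ∈ Icc 0 (min x (1 - x))) :
    x - b ∈ Icc (-1) 1 ∧ 2 * R x - R (x - b) ∈ Icc (-1) 1 := by
  have hbx : b ≤ x := hb.2.trans (min_le_left _ _)
  have hb1x : b ≤ 1 - x := hb.2.trans (min_le_right _ _)
  have hxb : x - b ∈ Icc 0 1 := ⟨by linarith, by linarith [hb.1, hx.2]⟩
  have hRx := map_mem_Icc_zero_one hR hR0 hR1 ⟨hx.1.le, hx.2.le⟩
  have hRxb := map_mem_Icc_zero_one hR hR0 hR1 hxb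
  have hle : R x ≤ R (x - b) :=
    hR ⟨by linarith [hxb.1], hxb.2⟩ ⟨by linarith [hx.1], hx.2.le⟩ (by linarith [hb.1])
  exact ⟨⟨by linarith [hxb.1], hxb.2⟩,
    ⟨by linarith [hRx.1, hRxb.2], by linarith [hRx.2]⟩⟩

/-- At `m = min x (1 - x)` either `x - m = 0` or `x - m = 2x - 1`; in both cases midpoint
concavity of `R` between that point and `1`, where `R 1 = 0`, gives the bound. -/
theorem map_two_mul_sub_map_sub_min_le (hR : ConcaveOn ℝ (Icc (-1) 1) R)
    (hR' : AntitoneOn R (Icc (-1) 1)) (hR0 : R 0 = 1) (hR1 : R 1 = 0) (hRR : R (R x) = x)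
    (hx : x ∈ Ioo 0 1) :
    R (2 * R x - R (x - min x (1 - x))) - R (R x) ≤ min x (1 - x) := by
  have hRx := map_mem_Icc_zero_one hR' hR0 hR1 ⟨hx.1.le, hx.2.le⟩
  have hone : (1 : ℝ) ∈ Icc (-1) 1 := ⟨by norm_num, le_rfl⟩
  rcases le_total x (1 - x) with hle | hle
  · have hmid := hR.add_le_two_mul_map_midpoint
      (⟨by linarith [hRx.1], by linarith [hRx.2]⟩ : 2 * R x - 1 ∈ Icc (-1) 1) hone
    rw [hR1, show (2 * R x - 1 + 1) / 2 = R x by ring, hRR] at hmid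
    rw [min_eq_left hle, sub_self, hR0, hRR]
    linarith
  · have hmid := hR.add_le_two_mul_map_midpoint
      (⟨by linarith [hx.1], by linarith [hx.2]⟩ : 2 * x - 1 ∈ Icc (-1) 1) hone
    rw [hR1, show (2 * x - 1 + 1) / 2 = x by ring] at hmid
    have hmem := (sub_mem_Icc_and_two_mul_sub_mem_Icc hR' hR0 hR1 hx
      (⟨le_min hx.1.le (by linarith [hx.2]), le_rfl⟩ : min x (1 - x) ∈ Icc 0 _)).2
    rw [min_eq_right hle, show x - (1 - x) = 2 * x - 1 by ring] at hmem ⊢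
    have hRu : R (2 * R x - R (2 * x - 1)) ≤ 1 :=
      (hR' ⟨by norm_num, zero_le_one⟩ hmem (by linarith)).trans_eq hR0
    linarith

end Reflection

theorem stmt_18_general (p : ℕ → ℝ) (hp00 : p 0 = 0)
    (hsum1 : ∑' k, p k = 1)
    (G R R' R'' f : ℝ → ℝ)
    (hG : ∀ t, G t = ∑' k, p k * t ^ k)
    (hRdef : ∀ t, R t = 1 - G t)
    (hf : ∀ t, f t = R (R t))
    (hR' : ∀ t ∈ Set.Icc (-1:ℝ) 1, HasDerivAt R (R' t) t)
    (hR'' : ∀ t ∈ Set.Icc (-1:ℝ) 1, HasDerivAt R' (R'' t) t)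
    (hR'neg : ∀ t ∈ Set.Icc (-1:ℝ) 1, R' t < 0)
    (hR''neg : ∀ t ∈ Set.Icc (-1:ℝ) 1, R'' t < 0)
    (x : ℝ) (hx : x ∈ Set.Ioo (0:ℝ) 1) (hfix : f x = x)
    (m : ℝ) (hm : m = min x (1 - x))
    (h : ℝ → ℝ)
    (hh : ∀ b, h b = R (2 * R x - R (x - b)) - R (R x)) :
    h 0 = 0 ∧
    HasDerivAt h (R' (R x) * R' x) 0 ∧
    StrictMonoOn h (Set.Icc 0 m) ∧
    StrictConcaveOn ℝ (Set.Icc 0 m) h ∧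
    (R' (R x) * R' x ≤ 1 → ∀ b ∈ Set.Ioc (0:ℝ) m, h b < b) ∧
    (1 < R' (R x) * R' x → ∃ b ∈ Set.Ioc (0:ℝ) m, h b = b) := by
  subst hm
  have hR0 : R 0 = 1 := by
    rw [hRdef, hG, tsum_eq_single 0 fun k hk => by simp [hk]]
    simp [hp00]
  have hR1 : R 1 = 0 := by simp [hRdef, hG, hsum1]
  have hRanti := (strictAntiOn_of_forall_hasDerivAt_neg (convex_Icc _ _) hR' hR'neg).antitoneOn
  have hm0 : 0 < min x (1 - x) := lt_min hx.1 (by linarith [hx.2])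
  have hdom := fun b (hb : b ∈ Icc 0 (min x (1 - x))) =>
    sub_mem_Icc_and_two_mul_sub_mem_Icc hRanti hR0 hR1 hx hb
  have hderiv := fun b (hb : b ∈ Icc 0 (min x (1 - x))) =>
    hasDerivAt_of_eq_comp_const_sub hh (hR' _ (hdom b hb).2) (hR' _ (hdom b hb).1)
  have hRx : 2 * R x - R x = R x := by ring
  have hh0 : h 0 = 0 := by rw [hh, sub_zero, hRx, sub_self]
  have hd0 : HasDerivAt h (R' (R x) * R' x) 0 := by
    simpa only [sub_zero, hRx] using hderiv 0 ⟨le_rfl, hm0.le⟩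
  have hconc :=
    strictConcaveOn_of_eq_comp_const_sub hh (convex_Icc _ _) hR' hR'' hR'neg hR''neg hdom
  have hhm : h (min x (1 - x)) ≤ min x (1 - x) := by
    rw [hh]
    exact map_two_mul_sub_map_sub_min_le
      (strictConcaveOn_of_forall_hasDerivAt2_neg (convex_Icc _ _) hR' hR'' hR''neg).concaveOn
      hRanti hR0 hR1 ((hf x).symm.trans hfix) hx
  exact ⟨hh0, hd0, strictMonoOn_of_eq_comp_const_sub hh (convex_Icc _ _) hR' hR'neg hdom, hconc,
    hconc.lt_self_of_hasDerivAt_zero_le_one hh0 hd0,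
    fun hd1 => exists_mem_Ioc_eq_self_of_one_lt_deriv hm0
      (fun b hb => (hderiv b hb).continuousAt.continuousWithinAt) hh0 hd0 hd1 hhm⟩

theorem stmt_18 (p : ℕ → ℝ) (hp0 : ∀ k, 0 ≤ p k) (hp00 : p 0 = 0)
    (hsum : Summable p) (hsum1 : ∑' k, p k = 1)
    (hp2 : ∃ k, 2 ≤ k ∧ 0 < p k)
    (G R R' R'' f : ℝ → ℝ)
    (hG : ∀ t, G t = ∑' k, p k * t ^ k)
    (hRdef : ∀ t, R t = 1 - G t)
    (hf : ∀ t, f t = R (R t))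
    (hR' : ∀ t ∈ Set.Icc (-1:ℝ) 1, HasDerivAt R (R' t) t)
    (hR'' : ∀ t ∈ Set.Icc (-1:ℝ) 1, HasDerivAt R' (R'' t) t)
    (hRpos : ∀ t ∈ Set.Ioo (0:ℝ) 1, 0 < R t)
    (hR'neg : ∀ t ∈ Set.Icc (-1:ℝ) 1, R' t < 0)
    (hR''neg : ∀ t ∈ Set.Icc (-1:ℝ) 1, R'' t < 0)
    (x : ℝ) (hx : x ∈ Set.Ioo (0:ℝ) 1) (hfix : f x = x)
    (m : ℝ) (hm : m = min x (1 - x))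
    (h : ℝ → ℝ)
    (hh : ∀ b, h b = R (2 * R x - R (x - b)) - R (R x)) :
    h 0 = 0 ∧
    HasDerivAt h (R' (R x) * R' x) 0 ∧
    StrictMonoOn h (Set.Icc 0 m) ∧
    StrictConcaveOn ℝ (Set.Icc 0 m) h ∧
    (R' (R x) * R' x ≤ 1 → ∀ b ∈ Set.Ioc (0:ℝ) m, h b < b) ∧
    (1 < R' (R x) * R' x → ∃ b ∈ Set.Ioc (0:ℝ) m, h b = b) :=
  stmt_18_general p hp00 hsum1 G R R' R'' f hG hRdef hf hR' hR'' hR'neg hR''neg x hx hfix m hm h hh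
end
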